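/- arXiv:1510.07623 — 3 statements merged into one kernel-verified Lean document; each statement's English description precedes it below -/
import Mathlib

section
/- If p₁ ≤ 1/n (all key probabilities are at most 1/n), then for any λ > 0 and any B ⊆ [n], Pr[ μ₁(B) ≥ (|B|/n)·(eλ) ] ≤ λ^{-λ·|B|}. -/
/-!
Chernoff's method with the exponent `t = n log λ`. The key `i` contributes the factor
`1 - |B|/n + (|B|/n) λ^{n pᵢ}` to `E[λ^{n μ₁(B)}]`; since `0 ≤ n pᵢ ≤ 1`, Bernoulli's inequality
bounds it by `exp (|B| pᵢ (λ - 1))`, so `E[λ^{n μ₁(B)}] ≤ exp (|B| (λ - 1))`. Markov's inequality at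
the threshold `(|B|/n) e λ` then gives `exp (|B| (λ - 1 - e λ log λ)) ≤ λ^{-λ |B|}`, using
`λ - 1 ≤ λ log λ`. For `λ ≤ 1` the bound is at least `1` and there is nothing to prove.
-/

open Finset Real

lemma card_filter_le_mul_exp_le_sum_exp {Ω : Type*} [Fintype Ω] (X : Ω → ℝ) {t : ℝ}
    (ht : 0 ≤ t) (a : ℝ) :
    (#{ω | a ≤ X ω} : ℝ) * exp (t * a) ≤ ∑ ω, exp (t * X ω) :=
  calc (#{ω | a ≤ X ω} : ℝ) * exp (t * a) = ∑ ω with a ≤ X ω, exp (t * a) := by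
        rw [sum_const, nsmul_eq_mul]
    _ ≤ ∑ ω with a ≤ X ω, exp (t * X ω) :=
        sum_le_sum fun ω hω => exp_le_exp.2 <| mul_le_mul_of_nonneg_left (mem_filter.1 hω).2 ht
    _ ≤ ∑ ω, exp (t * X ω) :=
        sum_le_sum_of_subset_of_nonneg (subset_univ _) fun _ _ _ => (exp_pos _).le

section BinMass

variable {K α : Type*} [Fintype K] [DecidableEq K] [Fintype α] [DecidableEq α]

/-- The paper's `μ₁(B)`, for the hash function `h₁ = h`. -/
def binMass (p : K → ℝ) (B : Finset α) (h : K → α) : ℝ :=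
  ∑ i with h i ∈ B, p i

lemma sum_exp_mul_binMass (p : K → ℝ) (B : Finset α) (t : ℝ) :
    ∑ h : K → α, exp (t * binMass p B h) =
      ∏ i, ((Fintype.card α : ℝ) + #B * (exp (t * p i) - 1)) := by
  have hsplit : ∀ h : K → α, exp (t * binMass p B h) = ∏ i, exp (t * if h i ∈ B then p i else 0) :=
    fun h => by rw [← exp_sum, ← mul_sum, binMass, sum_filter]
  have hbin : ∀ i, ∑ v : α, exp (t * if v ∈ B then p i else 0) =
      (Fintype.card α : ℝ) + #B * (exp (t * p i) - 1) := by
    intro i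
    have hsplit_v : ∀ v : α, exp (t * if v ∈ B then p i else 0) =
        1 + if v ∈ B then exp (t * p i) - 1 else 0 := fun v => by split_ifs <;> simp
    simp only [hsplit_v, sum_add_distrib, sum_ite_mem, univ_inter, sum_const, card_univ,
      nsmul_eq_mul, mul_one]
  simp_rw [hsplit, ← hbin]
  exact (Fintype.prod_sum fun i (v : α) => exp (t * if v ∈ B then p i else 0)).symm

lemma card_add_mul_exp_sub_one_le {n b q lam : ℝ} (hn : 0 ≤ n) (hb : 0 ≤ b) (hq : 0 ≤ q)
    (hnq : n * q ≤ 1) (hlam : 0 < lam) :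
    n + b * (exp (n * log lam * q) - 1) ≤ n * exp (b * q * (lam - 1)) := by
  have bernoulli : exp (n * log lam * q) ≤ 1 + n * q * (lam - 1) := by
    have := rpow_one_add_le_one_add_mul_self (by linarith : -1 ≤ lam - 1) (mul_nonneg hn hq) hnq
    rwa [add_sub_cancel, rpow_def_of_pos hlam, ← mul_assoc, mul_comm (log lam)] at this
  calc n + b * (exp (n * log lam * q) - 1) ≤ n * (1 + b * q * (lam - 1)) := by
        nlinarith [mul_le_mul_of_nonneg_left bernoulli hb]
    _ ≤ n * exp (b * q * (lam - 1)) := by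
        gcongr
        linarith [add_one_le_exp (b * q * (lam - 1))]

lemma sum_exp_mul_binMass_le {p : K → ℝ} (hp : ∀ i, 0 ≤ p i)
    (hmax : ∀ i, p i ≤ 1 / (Fintype.card α : ℝ)) (B : Finset α) {lam : ℝ} (hlam : 0 < lam) :
    ∑ h : K → α, exp (Fintype.card α * log lam * binMass p B h) ≤
      Fintype.card (K → α) * exp (#B * (lam - 1) * ∑ i, p i) := by
  set n : ℝ := (Fintype.card α : ℝ)
  have hn : 0 ≤ n := Nat.cast_nonneg _
  have hBn : (#B : ℝ) ≤ n := by simp only [n]; exact_mod_cast B.card_le_univ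
  have hfactor_nonneg : ∀ i, 0 ≤ n + #B * (exp (n * log lam * p i) - 1) := fun i => by
    nlinarith [exp_pos (n * log lam * p i)]
  have hfactor : ∀ i, n + #B * (exp (n * log lam * p i) - 1) ≤ n * exp (#B * p i * (lam - 1)) :=
    fun i => card_add_mul_exp_sub_one_le hn (Nat.cast_nonneg _) (hp i)
      (by rw [mul_comm]; exact mul_le_of_le_div₀ zero_le_one hn (hmax i)) hlam
  calc ∑ h : K → α, exp (n * log lam * binMass p B h)
      = ∏ i, (n + #B * (exp (n * log lam * p i) - 1)) := sum_exp_mul_binMass p B _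
    _ ≤ ∏ i, n * exp (#B * p i * (lam - 1)) :=
        prod_le_prod (fun i _ => hfactor_nonneg i) fun i _ => hfactor i
    _ = Fintype.card (K → α) * exp (#B * (lam - 1) * ∑ i, p i) := by
        rw [prod_mul_distrib, prod_const, ← exp_sum, card_univ, Fintype.card_fun, mul_sum]
        simp only [n, Nat.cast_pow, mul_right_comm]

lemma card_le_binMass_div_card_le {p : K → ℝ} (hp : ∀ i, 0 ≤ p i)
    (hmax : ∀ i, p i ≤ 1 / (Fintype.card α : ℝ)) (B : Finset α) {lam : ℝ} (hlam : 1 ≤ lam)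
    (a : ℝ) :
    (#{h | a ≤ binMass p B h} : ℝ) / Fintype.card (K → α) ≤
      exp (#B * (lam - 1) * ∑ i, p i - Fintype.card α * log lam * a) := by
  refine div_le_of_le_mul₀ (Nat.cast_nonneg _) (exp_pos _).le ?_
  rw [exp_sub, div_mul_eq_mul_div, le_div_iff₀ (exp_pos _), mul_comm (exp _)]
  exact (card_filter_le_mul_exp_le_sum_exp _ (by have := log_nonneg hlam; positivity) a).trans
    (sum_exp_mul_binMass_le hp hmax B (by linarith))

end BinMass

open Classical in
/-- If all key probabilities are at most `1/n`, then for any `λ > 0` and any `B ⊆ [n]`,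
`Pr[ μ₁(B) ≥ (|B|/n)·(e·λ) ] ≤ (1/λ^λ)^{|B|}`. -/
theorem stmt1 {K : Type*} [Fintype K] [DecidableEq K] (n : ℕ) (hn : 1 ≤ n)
    (p : K → ℝ) (hp : ∀ i, 0 ≤ p i) (hsum : ∑ i, p i = 1)
    (hmax : ∀ i, p i ≤ 1 / n)
    (B : Finset (Fin n)) (lam : ℝ) (hlam : 0 < lam) :
    ((univ.filter (fun h : K → Fin n =>
        (B.card : ℝ) / n * (Real.exp 1 * lam) ≤
          ∑ i ∈ univ.filter (fun i => h i ∈ B), p i)).card : ℝ) /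
      (Fintype.card (K → Fin n) : ℝ) ≤ (1 / lam ^ (lam : ℝ)) ^ B.card := by
  rcases le_or_gt lam 1 with hle | hgt
  · calc _ ≤ (1 : ℝ) := div_le_one_of_le₀ (by exact_mod_cast card_filter_le _ _) (Nat.cast_nonneg _)
      _ ≤ _ :=
        one_le_pow₀ (one_le_one_div (rpow_pos_of_pos hlam _) (rpow_le_one hlam.le hle hlam.le))
  · have hchernoff := card_le_binMass_div_card_le hp (by simpa using hmax) B hgt.le
      ((B.card : ℝ) / n * (exp 1 * lam))
    have hexponent : (B.card : ℝ) * (lam - 1) * ∑ i, p i -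
        Fintype.card (Fin n) * log lam * ((B.card : ℝ) / n * (exp 1 * lam)) ≤
        B.card * -(lam * log lam) := by
      have hscale : (n : ℝ) * log lam * ((B.card : ℝ) / n * (exp 1 * lam)) =
          B.card * (exp 1 * (lam * log lam)) := by
        have hn' : (n : ℝ) ≠ 0 := by positivity
        field_simp
      have hmul_log : lam - 1 ≤ lam * log lam := self_sub_one_le_mul_log hlam.le
      have hmul_log_nonneg : 0 ≤ lam * log lam := mul_nonneg hlam.le (log_nonneg hgt.le)
      have he : 2 ≤ exp 1 := by linarith [add_one_le_exp (1 : ℝ)]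
      rw [hsum, mul_one, Fintype.card_fin, hscale, ← mul_sub]
      exact mul_le_mul_of_nonneg_left (by nlinarith) (Nat.cast_nonneg _)
    have hrhs : (1 / lam ^ lam) ^ B.card = exp (B.card * -(lam * log lam)) := by
      rw [rpow_def_of_pos hlam, one_div, ← exp_neg, ← exp_nat_mul, mul_comm (log lam)]
    exact hchernoff.trans ((exp_le_exp.2 hexponent).trans_eq hrhs.symm)
end

section
/- If p₁ ≤ 1/(5n) and d ≥ 2, then for every B ⊆ [n] with |B| = k, Pr[ μ_d(B) ≥ k/n ] ≤ (e·k/n)^{5k}. -/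
/-!
Exponential Markov inequality over the uniform choice of the hash functions. Since the hash
values of distinct keys are independent, the moment generating function of `μ_d(B)` factors over
the keys; each factor is `1 + (k/n)^d (e^{t p_i} - 1)`, which convexity of `exp` on `[0, M]` and
`1 + x ≤ e^x` bound by `exp ((k/n)^d p_i (e^{tM} - 1) / M)`. With `M = 1/(5n)` and
`t = log (n/k) / M` the resulting exponent is at most `5k (1 + log (k/n))`, using `d ≥ 2`.
-/

open Finset Real

lemma exp_mul_le_one_add_div_mul_exp_sub_one {t q M : ℝ} (hq : 0 ≤ q) (hqM : q ≤ M)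
    (hM : 0 < M) : exp (t * q) ≤ 1 + q / M * (exp (t * M) - 1) := by
  have hconv := convexOn_exp.2 (Set.mem_univ 0) (Set.mem_univ (t * M))
    (sub_nonneg.2 ((div_le_one hM).2 hqM)) (div_nonneg hq hM.le) (sub_add_cancel 1 (q / M))
  have hqM' : q / M * (t * M) = t * q := by field_simp
  simp only [smul_eq_mul, mul_zero, zero_add, exp_zero, mul_one, hqM'] at hconv
  linarith

lemma card_filter_mul_exp_le_sum_exp {α : Type*} [Fintype α] (f : α → ℝ) {t : ℝ}
    (ht : 0 ≤ t) (a : ℝ) : #(univ.filter fun x => a ≤ f x) * exp (t * a) ≤ ∑ x, exp (t * f x) := by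
  calc #(univ.filter fun x => a ≤ f x) * exp (t * a)
      = ∑ _x ∈ univ.filter fun x => a ≤ f x, exp (t * a) := by rw [sum_const, nsmul_eq_mul]
    _ ≤ ∑ x ∈ univ.filter fun x => a ≤ f x, exp (t * f x) :=
        sum_le_sum fun x hx => exp_le_exp.2 (mul_le_mul_of_nonneg_left (mem_filter.1 hx).2 ht)
    _ ≤ ∑ x, exp (t * f x) :=
        sum_le_sum_of_subset_of_nonneg (subset_univ _) fun _ _ _ => (exp_pos _).le

section Chernoff

variable {K Ω : Type*} [Fintype K] [DecidableEq K] [Fintype Ω] [DecidableEq Ω]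

lemma sum_exp_mul_sum_filter_mem (A : Finset Ω) (p : K → ℝ) (t : ℝ) :
    ∑ g : K → Ω, exp (t * ∑ i ∈ univ.filter (fun i => g i ∈ A), p i) =
      ∏ i, (Fintype.card Ω + #A * (exp (t * p i) - 1)) := by
  calc ∑ g : K → Ω, exp (t * ∑ i ∈ univ.filter (fun i => g i ∈ A), p i)
      = ∑ g : K → Ω, ∏ i, (1 + if g i ∈ A then exp (t * p i) - 1 else 0) := by
        refine sum_congr rfl fun g _ => ?_
        rw [sum_filter, mul_sum, exp_sum]
        refine prod_congr rfl fun i _ => ?_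
        split_ifs <;> simp
    _ = ∏ i, ∑ ω : Ω, (1 + if ω ∈ A then exp (t * p i) - 1 else 0) := by
        rw [Fintype.prod_sum]
    _ = ∏ i, (Fintype.card Ω + #A * (exp (t * p i) - 1)) := by
        refine prod_congr rfl fun i _ => ?_
        rw [sum_add_distrib, sum_ite_mem, univ_inter, sum_const, sum_const, card_univ,
          nsmul_eq_mul, nsmul_eq_mul, mul_one]

lemma sum_exp_mul_sum_filter_mem_le [Nonempty Ω] (A : Finset Ω) {p : K → ℝ} {t M : ℝ}
    (hM : 0 < M) (hp : ∀ i, 0 ≤ p i) (hpM : ∀ i, p i ≤ M) :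
    ∑ g : K → Ω, exp (t * ∑ i ∈ univ.filter (fun i => g i ∈ A), p i) ≤
      Fintype.card Ω ^ Fintype.card K *
        exp (#A / Fintype.card Ω * ((exp (t * M) - 1) / M) * ∑ i, p i) := by
  set N : ℝ := (Fintype.card Ω : ℝ)
  set q : ℝ := #A / N
  have hN : 0 < N := by positivity
  have hAN : (#A : ℝ) ≤ N := by simp only [N]; exact_mod_cast card_le_univ A
  have hq : 0 ≤ q := by positivity
  rw [sum_exp_mul_sum_filter_mem]
  calc ∏ i, (N + #A * (exp (t * p i) - 1))
      ≤ ∏ i, N * exp (q * (exp (t * p i) - 1)) := by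
        refine prod_le_prod (fun i _ => ?_) fun i _ => ?_
        · nlinarith [exp_pos (t * p i)]
        · have hqN : N * q = #A := mul_div_cancel₀ _ hN.ne'
          calc N + #A * (exp (t * p i) - 1) = N * (q * (exp (t * p i) - 1) + 1) := by
                rw [← hqN]; ring
            _ ≤ N * exp (q * (exp (t * p i) - 1)) := by gcongr; exact add_one_le_exp _
    _ = N ^ Fintype.card K * exp (∑ i, q * (exp (t * p i) - 1)) := by
        rw [prod_mul_distrib, prod_const, card_univ, exp_sum]
    _ ≤ N ^ Fintype.card K * exp (q * ((exp (t * M) - 1) / M) * ∑ i, p i) := by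
        gcongr
        rw [mul_sum]
        refine sum_le_sum fun i _ => ?_
        rw [mul_assoc]
        refine mul_le_mul_of_nonneg_left ?_ hq
        calc exp (t * p i) - 1 ≤ p i / M * (exp (t * M) - 1) := by
              linarith [exp_mul_le_one_add_div_mul_exp_sub_one (t := t) (hp i) (hpM i) hM]
          _ = (exp (t * M) - 1) / M * p i := by ring

theorem card_filter_le_sum_filter_mem_div_card_le_exp [Nonempty Ω] (A : Finset Ω)
    {p : K → ℝ} {t M : ℝ} (ht : 0 ≤ t) (hM : 0 < M) (hp : ∀ i, 0 ≤ p i) (hpM : ∀ i, p i ≤ M)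
    (β : ℝ) :
    (#(univ.filter fun g : K → Ω => β ≤ ∑ i ∈ univ.filter (fun i => g i ∈ A), p i) : ℝ) /
        Fintype.card (K → Ω) ≤
      exp (#A / Fintype.card Ω * ((exp (t * M) - 1) / M) * ∑ i, p i - t * β) := by
  have hmarkov := card_filter_mul_exp_le_sum_exp
    (fun g : K → Ω => ∑ i ∈ univ.filter (fun i => g i ∈ A), p i) ht β
  have hmgf := sum_exp_mul_sum_filter_mem_le A (t := t) hM hp hpM
  rw [exp_sub, div_le_div_iff₀ (by positivity) (exp_pos _), Fintype.card_fun]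
  push_cast
  linarith

end Chernoff

theorem card_filter_le_sum_filter_forall_mem_div_card_le_exp {ι K α : Type*} [Fintype ι]
    [DecidableEq ι] [Fintype K] [DecidableEq K] [Fintype α] [DecidableEq α] [Nonempty α]
    (B : Finset α) {p : K → ℝ} {t M : ℝ} (ht : 0 ≤ t) (hM : 0 < M) (hp : ∀ i, 0 ≤ p i)
    (hpM : ∀ i, p i ≤ M) (β : ℝ) :
    (#(univ.filter fun h : ι → K → α =>
        β ≤ ∑ i ∈ univ.filter (fun i => ∀ r, h r i ∈ B), p i) : ℝ) /
        Fintype.card (ι → K → α) ≤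
      exp ((#B / Fintype.card α) ^ Fintype.card ι * ((exp (t * M) - 1) / M) * ∑ i, p i
        - t * β) := by
  have hcard := card_equiv (Equiv.piComm fun (_ : ι) (_ : K) => α)
    (s := univ.filter fun h : ι → K → α =>
      β ≤ ∑ i ∈ univ.filter (fun i => ∀ r, h r i ∈ B), p i)
    (t := univ.filter fun g : K → ι → α =>
      β ≤ ∑ i ∈ univ.filter (fun i => g i ∈ Fintype.piFinset fun _ => B), p i)
    (by simp [Fintype.mem_piFinset, Equiv.piComm_apply])
  rw [hcard, Fintype.card_congr (Equiv.piComm fun (_ : ι) (_ : K) => α)]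
  convert card_filter_le_sum_filter_mem_div_card_le_exp (Fintype.piFinset fun _ : ι => B)
    ht hM hp hpM β using 4
  simp [div_pow]

lemma exp_pow_mul_sub_le {β M : ℝ} (hβ0 : 0 < β) (hβ1 : β ≤ 1) (hM : 0 < M) {d : ℕ}
    (hd : 2 ≤ d) :
    exp (β ^ d * ((exp (-log β / M * M) - 1) / M) - -log β / M * β) ≤
      exp ((β + β * log β) / M) := by
  have hpow : β ^ d * (β⁻¹ - 1) ≤ β := by
    obtain ⟨e, rfl⟩ := Nat.exists_eq_add_of_le' hd
    calc β ^ (e + 2) * (β⁻¹ - 1) ≤ β ^ (e + 2) * β⁻¹ := by gcongr; linarith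
      _ = β ^ (e + 1) := by rw [pow_succ _ (e + 1), mul_inv_cancel_right₀ hβ0.ne']
      _ ≤ β := pow_le_of_le_one hβ0.le hβ1 (Nat.succ_ne_zero e)
  rw [div_mul_cancel₀ _ hM.ne', exp_neg, exp_log hβ0]
  gcongr
  calc β ^ d * ((β⁻¹ - 1) / M) - -log β / M * β = (β ^ d * (β⁻¹ - 1) + β * log β) / M := by
        ring
    _ ≤ (β + β * log β) / M := by gcongr

open Classical in
/-- If `p₁ ≤ 1/(5n)` and `d ≥ 2`, then for every `B ⊆ [n]` with `|B| = k`,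
`Pr[ μ_d(B) ≥ k/n ] ≤ (e·k/n)^{5k}`. -/
theorem stmt3 {K : Type*} [Fintype K] [DecidableEq K] (n d : ℕ) (hn : 1 ≤ n) (hd : 2 ≤ d)
    (p : K → ℝ) (hp : ∀ i, 0 ≤ p i) (hsum : ∑ i, p i = 1)
    (hmax : ∀ i, p i ≤ 1 / (5 * n))
    (B : Finset (Fin n)) (k : ℕ) (hk : B.card = k) :
    ((univ.filter (fun h : Fin d → K → Fin n =>
        (k : ℝ) / n ≤ ∑ i ∈ univ.filter (fun i => ∀ r, h r i ∈ B), p i)).card : ℝ) /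
      (Fintype.card (Fin d → K → Fin n) : ℝ) ≤ (Real.exp 1 * k / n) ^ (5 * k) := by
  have hn' : (0 : ℝ) < n := by exact_mod_cast hn
  have : Nonempty (Fin n) := ⟨⟨0, hn⟩⟩
  rcases Nat.eq_zero_or_pos k with rfl | hk0
  · rw [mul_zero, pow_zero]
    exact div_le_one_of_le₀ (by exact_mod_cast card_le_univ _) (by positivity)
  set β : ℝ := k / n with hβ
  have hβ0 : 0 < β := by positivity
  have hβ1 : β ≤ 1 := div_le_one_of_le₀ (by simpa [hk] using card_le_univ B) hn'.le
  have hM : (0 : ℝ) < 1 / (5 * n) := by positivity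
  -- this tilt makes `exp (t * M) = 1 / β`
  have ht : 0 ≤ -log β / (1 / (5 * n)) :=
    div_nonneg (neg_nonneg.2 (log_nonpos hβ0.le hβ1)) hM.le
  have hbound :=
    card_filter_le_sum_filter_forall_mem_div_card_le_exp B ht hM hp hmax β (ι := Fin d)
  rw [hsum, Fintype.card_fin, Fintype.card_fin, hk, mul_one, ← hβ] at hbound
  -- the two filters differ only in the `Decidable` instance chosen for `∀ r, h r i ∈ B`
  refine le_trans (le_of_eq (by congr!)) (hbound.trans ?_)
  calc _ ≤ exp ((β + β * log β) / (1 / (5 * n))) := exp_pow_mul_sub_le hβ0 hβ1 hM hd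
    _ = exp ((5 * k : ℕ) * (1 + log β)) := by
        congr 1
        rw [hβ]
        push_cast
        field_simp
    _ = (exp 1 * k / n) ^ (5 * k) := by rw [exp_nat_mul, exp_add, exp_log hβ0, mul_div_assoc]
end

section
/- The sum Σ_{k=1}^{⌊n/5⌋} C(n,k)·(e·k/n)^{5k} is at most Σ_{k=1}^{⌊n/5⌋} (e^{3/2}·k/n)^{4k}, and this quantity is o(1/n) as n → ∞. -/
/-!
The bound `C(n,k) ≤ (e·n/k)^k` turns the `k`-th term into `(e^{3/2}·k/n)^{4k}`. For `k ≤ n/5`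
the base `x = (e^{3/2}·k/n)^4` is at most `ρ = (e^{3/2}/5)^4 < 1`, so `x^k ≤ x·ρ^{k-1}` with
`x = (e^{3/2}/n)^4·k^4`; the convergent series `Σ k^4 ρ^k` then makes the sum `O(n^{-4})`.
-/

open Finset Filter Asymptotics

theorem Nat.choose_le_exp_one_mul_div_pow (n k : ℕ) :
    (n.choose k : ℝ) ≤ (Real.exp 1 * n / k) ^ k := by
  rcases k.eq_zero_or_pos with rfl | hk
  · simp
  have hk' : (k : ℝ) ≠ 0 := by positivity
  calc (n.choose k : ℝ) ≤ (n : ℝ) ^ k / k.factorial := Nat.choose_le_pow_div k n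
    _ = (n / k : ℝ) ^ k * ((k : ℝ) ^ k / k.factorial) := by
        rw [← mul_div_assoc, ← mul_pow, div_mul_cancel₀ _ hk']
    _ ≤ (n / k : ℝ) ^ k * Real.exp k := by
        gcongr; exact Real.pow_div_factorial_le_exp _ (Nat.cast_nonneg k) k
    _ = (Real.exp 1 * n / k) ^ k := by rw [← Real.exp_one_pow]; ring

theorem Real.exp_three_halves_lt_five : Real.exp (3 / 2) < 5 := by
  have hsq : Real.exp (3 / 2) ^ 2 = Real.exp 1 ^ 3 := by
    rw [Real.exp_one_pow, ← Real.exp_nat_mul]; norm_num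
  have hcube : Real.exp 1 ^ 3 < 25 :=
    calc Real.exp 1 ^ 3 < 2.7182818286 ^ 3 := by
          gcongr; exact Real.exp_one_lt_d9
      _ < 25 := by norm_num
  nlinarith [Real.exp_pos (3 / 2)]

theorem Nat.choose_mul_exp_one_mul_div_pow_le {n : ℕ} (hn : n ≠ 0) (k : ℕ) :
    (n.choose k : ℝ) * (Real.exp 1 * k / n) ^ (5 * k) ≤ (Real.exp (3 / 2) * k / n) ^ (4 * k) := by
  rcases k.eq_zero_or_pos with rfl | hk
  · simp
  have hprod : Real.exp 1 * n / k * (Real.exp 1 * k / n) = Real.exp 1 ^ 2 := by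
    field_simp
  have hexp : Real.exp (3 / 2) ^ 4 = Real.exp 1 ^ 6 := by
    rw [Real.exp_one_pow, ← Real.exp_nat_mul]; norm_num
  calc (n.choose k : ℝ) * (Real.exp 1 * k / n) ^ (5 * k)
      ≤ (Real.exp 1 * n / k) ^ k * (Real.exp 1 * k / n) ^ (5 * k) := by
        gcongr; exact Nat.choose_le_exp_one_mul_div_pow n k
    _ = (Real.exp 1 * n / k * (Real.exp 1 * k / n) * (Real.exp 1 * k / n) ^ 4) ^ k := by ring
    _ = (Real.exp (3 / 2) * k / n) ^ (4 * k) := by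
        rw [hprod, pow_mul, div_pow (Real.exp (3 / 2) * k), mul_pow (Real.exp (3 / 2)), hexp]; ring

theorem pow_mul_le_mul_pow {x ρ : ℝ} (hx : 0 ≤ x) (hxρ : x ≤ ρ) {k : ℕ} (hk : k ≠ 0) :
    x ^ k * ρ ≤ x * ρ ^ k := by
  obtain ⟨j, rfl⟩ := Nat.exists_eq_succ_of_ne_zero hk
  have hρ : 0 ≤ ρ := hx.trans hxρ
  calc x ^ (j + 1) * ρ = x * (x ^ j * ρ) := by ring
    _ ≤ x * (ρ ^ j * ρ) := by gcongr
    _ = x * ρ ^ (j + 1) := by ring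

section
variable {a p : ℕ} {c : ℝ}

theorem mul_natCast_div_pow_mul_le (hc : 0 ≤ c) (ha : 0 < a) {n k : ℕ} (hk : k ≠ 0)
    (hkn : a * k ≤ n) :
    (c * k / n) ^ (p * k) * (c / a) ^ p ≤ (c / n) ^ p * ((k : ℝ) ^ p * ((c / a) ^ p) ^ k) := by
  have hn : (0 : ℝ) < n := by exact_mod_cast (Nat.mul_pos ha (Nat.pos_of_ne_zero hk)).trans_le hkn
  have hkn' : (a : ℝ) * k ≤ n := by exact_mod_cast hkn
  have hx : c * k / n ≤ c / a := by
    rw [div_le_div_iff₀ hn (by exact_mod_cast ha)]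
    nlinarith
  calc (c * k / n) ^ (p * k) * (c / a) ^ p = ((c * k / n) ^ p) ^ k * (c / a) ^ p := by
        rw [pow_mul]
    _ ≤ (c * k / n) ^ p * ((c / a) ^ p) ^ k :=
        pow_mul_le_mul_pow (by positivity) (by gcongr) hk
    _ = (c / n) ^ p * ((k : ℝ) ^ p * ((c / a) ^ p) ^ k) := by ring

theorem isBigO_sum_Icc_mul_natCast_div_pow (hc : 0 < c) (hca : c < a) (hp : p ≠ 0) :
    (fun n : ℕ => ∑ k ∈ Icc 1 (n / a), (c * k / n) ^ (p * k)) =O[atTop]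
      fun n => 1 / (n : ℝ) ^ p := by
  set ρ := (c / a) ^ p
  have ha : 0 < a := by exact_mod_cast hc.trans hca
  have hρ : 0 < ρ := by positivity
  have hρ1 : ρ < 1 := pow_lt_one₀ (by positivity) ((div_lt_one (by positivity)).2 hca) hp
  have hsum : Summable fun k : ℕ => (k : ℝ) ^ p * ρ ^ k :=
    summable_pow_mul_geometric_of_norm_lt_one p (by rwa [Real.norm_of_nonneg hρ.le])
  set T := ∑' k : ℕ, (k : ℝ) ^ p * ρ ^ k
  refine isBigO_of_le' (c := c ^ p * T / ρ) _ fun n => ?_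
  set S := ∑ k ∈ Icc 1 (n / a), (c * k / n) ^ (p * k)
  have hSρ : S * ρ ≤ (c / n) ^ p * T :=
    calc S * ρ = ∑ k ∈ Icc 1 (n / a), (c * k / n) ^ (p * k) * ρ := sum_mul _ _ _
      _ ≤ ∑ k ∈ Icc 1 (n / a), (c / n) ^ p * ((k : ℝ) ^ p * ρ ^ k) := by
          refine sum_le_sum fun k hk => ?_
          obtain ⟨hk1, hka⟩ := mem_Icc.mp hk
          exact mul_natCast_div_pow_mul_le hc.le ha (by omega)
            (by rw [mul_comm]; exact (Nat.le_div_iff_mul_le ha).mp hka)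
      _ = (c / n) ^ p * ∑ k ∈ Icc 1 (n / a), (k : ℝ) ^ p * ρ ^ k := (mul_sum _ _ _).symm
      _ ≤ (c / n) ^ p * T := by
          gcongr
          exact hsum.sum_le_tsum _ fun _ _ => by positivity
  rw [Real.norm_of_nonneg (by positivity), Real.norm_of_nonneg (by positivity),
    show c ^ p * T / ρ * (1 / (n : ℝ) ^ p) = (c / n) ^ p * T / ρ by ring, le_div_iff₀ hρ]
  exact hSρ

end

theorem isLittleO_one_div_pow_one_div {p : ℕ} (hp : 1 < p) :
    (fun n : ℕ => 1 / (n : ℝ) ^ p) =o[atTop] fun n => 1 / (n : ℝ) := by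
  simpa [Function.comp_def] using
    (isLittleO_pow_pow (𝕜 := ℝ) hp).comp_tendsto tendsto_one_div_atTop_nhds_zero_nat

/-- The union-bound computation: `Σ_{k=1}^{⌊n/5⌋} C(n,k)·(e·k/n)^{5k}` is at most
`Σ_{k=1}^{⌊n/5⌋} (e^{3/2}·k/n)^{4k}`, which is `o(1/n)` as `n → ∞`. -/
theorem stmt4 :
    (∀ n : ℕ, 1 ≤ n →
      ∑ k ∈ Finset.Icc 1 (n / 5), (n.choose k : ℝ) * (Real.exp 1 * k / n) ^ (5 * k) ≤
        ∑ k ∈ Finset.Icc 1 (n / 5), (Real.exp (3 / 2) * k / n) ^ (4 * k)) ∧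
    (fun n : ℕ => ∑ k ∈ Finset.Icc 1 (n / 5), (Real.exp (3 / 2) * k / n) ^ (4 * k))
      =o[atTop] (fun n : ℕ => 1 / (n : ℝ)) := by
  refine ⟨fun n hn => sum_le_sum fun k _ => Nat.choose_mul_exp_one_mul_div_pow_le (by omega) k, ?_⟩
  have hbigO := isBigO_sum_Icc_mul_natCast_div_pow (a := 5) (p := 4) (Real.exp_pos (3 / 2))
    (by exact_mod_cast Real.exp_three_halves_lt_five) four_ne_zero
  exact hbigO.trans_isLittleO (isLittleO_one_div_pow_one_div (by norm_num))
end
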